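/- Under the coverage assumption Q(x) ∈ 𝒫(x) for all x ∈ X (Wasserstein balls of radius r_N) and Lipschitz continuity of h in its second argument with constant c_p, the out-of-sample value J_N of a DRO-optimal solution satisfies J* ≤ J_N ≤ J* + 2 c_p r_N, where J* = min_x 𝔼_{Q(x)}[h(x,ξ)] is the true optimal value. -/

import Mathlib

/-!
Coverage gives `J* ≤ J_N ≤ Ĵ_N`, and optimality of `x̂_N` gives
`Ĵ_N ≤ sup_{P ∈ 𝒫(x*)} 𝔼_P[h(x*, ξ)]`. Every `P ∈ 𝒫(x*)` and the true law `Q(x*)` lie within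
Wasserstein distance `r_N` of the centre `P̂(x*)`; integrating a `c_p`-Lipschitz function against
any coupling moves its expectation by at most `c_p` times the transport cost, so the expectations
of `h(x*, ·)` under `P` and `Q(x*)` differ by at most `2 c_p r_N`.
-/

open MeasureTheory
open scoped ENNReal

/-- A coupling of two measures: a measure on the product whose marginals are `P` and `Q`. -/
def IsCoupling {Ξ : Type*} [MeasurableSpace Ξ] (P Q : Measure Ξ) (γ : Measure (Ξ × Ξ)) : Prop :=
  γ.map Prod.fst = P ∧ γ.map Prod.snd = Q

/-- The L¹-Wasserstein distance: the infimum of the transport cost over all couplings. -/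
noncomputable def wassersteinDist {Ξ : Type*} [MeasurableSpace Ξ] [PseudoMetricSpace Ξ]
    (P Q : Measure Ξ) : ℝ :=
  sInf {r : ℝ | ∃ γ : Measure (Ξ × Ξ), IsCoupling P Q γ ∧ ∫ p, dist p.1 p.2 ∂γ = r}

open scoped NNReal

section Wasserstein

variable {Ξ : Type*} [MeasurableSpace Ξ]

theorem IsCoupling.isProbabilityMeasure {P Q : Measure Ξ} {γ : Measure (Ξ × Ξ)}
    (hγ : IsCoupling P Q γ) [IsProbabilityMeasure P] : IsProbabilityMeasure γ := by
  obtain ⟨rfl, -⟩ := hγ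
  exact Measure.isProbabilityMeasure_of_map Prod.fst

theorem isCoupling_prod (P Q : Measure Ξ) [IsProbabilityMeasure P] [IsProbabilityMeasure Q] :
    IsCoupling P Q (P.prod Q) := by
  constructor <;> simp

variable [PseudoMetricSpace Ξ]

def wassersteinBall (R : Measure Ξ) (r : ℝ) : Set (Measure Ξ) :=
  {P | IsProbabilityMeasure P ∧ wassersteinDist P R ≤ r}

variable [CompactSpace Ξ] [OpensMeasurableSpace Ξ]

theorem IsCoupling.abs_integral_sub_le {P Q : Measure Ξ} {γ : Measure (Ξ × Ξ)}
    (hγ : IsCoupling P Q γ) [IsProbabilityMeasure P] {f : Ξ → ℝ} {K : ℝ≥0}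
    (hf : LipschitzWith K f) :
    |∫ s, f s ∂P - ∫ s, f s ∂Q| ≤ K * ∫ p, dist p.1 p.2 ∂γ := by
  have := hγ.isProbabilityMeasure
  have hfc := hf.continuous
  have integrable {g : Ξ × Ξ → ℝ} (hg : Continuous g) : Integrable g γ :=
    hg.integrable_of_hasCompactSupport (.of_compactSpace _)
  obtain ⟨rfl, rfl⟩ := hγ
  rw [integral_map measurable_fst.aemeasurable hfc.aestronglyMeasurable,
    integral_map measurable_snd.aemeasurable hfc.aestronglyMeasurable,
    ← integral_sub (integrable (by fun_prop)) (integrable (by fun_prop)),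
    ← integral_const_mul]
  calc |∫ p, f p.1 - f p.2 ∂γ| ≤ ∫ p, |f p.1 - f p.2| ∂γ := abs_integral_le_integral_abs
    _ ≤ ∫ p, K * dist p.1 p.2 ∂γ :=
      integral_mono (integrable (by fun_prop)) (integrable (by fun_prop))
        fun p => hf.dist_le_mul p.1 p.2

/-- The easy half of Kantorovich–Rubinstein duality. -/
theorem abs_integral_sub_le_mul_wassersteinDist (P Q : Measure Ξ) [IsProbabilityMeasure P]
    [IsProbabilityMeasure Q] {f : Ξ → ℝ} {K : ℝ≥0} (hf : LipschitzWith K f) :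
    |∫ s, f s ∂P - ∫ s, f s ∂Q| ≤ K * wassersteinDist P Q := by
  rw [wassersteinDist, ← smul_eq_mul, ← Real.sInf_smul_of_nonneg K.coe_nonneg]
  refine le_csInf ⟨_, _, ⟨_, isCoupling_prod P Q, rfl⟩, rfl⟩ ?_
  rintro _ ⟨_, ⟨γ, hγ, rfl⟩, rfl⟩
  exact hγ.abs_integral_sub_le hf

variable {R : Measure Ξ} [IsProbabilityMeasure R] {r : ℝ} {f : Ξ → ℝ} {K : ℝ≥0}

theorem integral_le_integral_add_of_mem_wassersteinBall {P Q : Measure Ξ}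
    (hP : P ∈ wassersteinBall R r) (hQ : Q ∈ wassersteinBall R r) (hf : LipschitzWith K f) :
    ∫ s, f s ∂P ≤ ∫ s, f s ∂Q + 2 * K * r := by
  obtain ⟨_, hPR⟩ := hP
  obtain ⟨_, hQR⟩ := hQ
  have hP_sub := (abs_le.mp (abs_integral_sub_le_mul_wassersteinDist P R hf)).2
  have hQ_sub := (abs_le.mp (abs_integral_sub_le_mul_wassersteinDist Q R hf)).1
  have hPR' := mul_le_mul_of_nonneg_left hPR K.coe_nonneg
  have hQR' := mul_le_mul_of_nonneg_left hQR K.coe_nonneg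
  linarith

theorem sSup_integral_wassersteinBall_le {Q : Measure Ξ} (hQ : Q ∈ wassersteinBall R r)
    (hf : LipschitzWith K f) :
    sSup ((fun P => ∫ s, f s ∂P) '' wassersteinBall R r) ≤ ∫ s, f s ∂Q + 2 * K * r :=
  csSup_le ⟨_, Q, hQ, rfl⟩ fun _ ⟨_, hP, hPf⟩ =>
    hPf ▸ integral_le_integral_add_of_mem_wassersteinBall hP hQ hf

theorem integral_le_sSup_integral_wassersteinBall {Q : Measure Ξ}
    (hQ : Q ∈ wassersteinBall R r) (hf : LipschitzWith K f) :
    ∫ s, f s ∂Q ≤ sSup ((fun P => ∫ s, f s ∂P) '' wassersteinBall R r) :=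
  le_csSup ⟨_, Set.forall_mem_image.2 fun _ hP =>
    integral_le_integral_add_of_mem_wassersteinBall hP hQ hf⟩ ⟨Q, hQ, rfl⟩

end Wasserstein

theorem dro_optimality_gap_general
    {X Ξ : Type*} [MeasurableSpace Ξ] [MetricSpace Ξ] [CompactSpace Ξ] [BorelSpace Ξ]
    (Phat Q : X → Measure Ξ) (rN cp : ℝ) (hcp : 0 ≤ cp)
    (hPhatProb : ∀ x, IsProbabilityMeasure (Phat x))
    (Pamb : X → Set (Measure Ξ))
    (hPamb : ∀ x, Pamb x =
      {P : Measure Ξ | IsProbabilityMeasure P ∧ wassersteinDist P (Phat x) ≤ rN})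
    (hcov : ∀ x, Q x ∈ Pamb x)
    (h : X → Ξ → ℝ) (C : ℝ) (hbdd : ∀ x s, |h x s| ≤ C)
    (hLip : ∀ x s₁ s₂, |h x s₁ - h x s₂| ≤ cp * dist s₁ s₂)
    (xhat : X)
    (hmin : sSup ((fun P => ∫ s, h xhat s ∂P) '' Pamb xhat) =
      ⨅ x, sSup ((fun P => ∫ s, h x s ∂P) '' Pamb x))
    (xstar : X)
    (hstar : (∫ s, h xstar s ∂(Q xstar)) = ⨅ x, ∫ s, h x s ∂(Q x)) :
    (⨅ x, ∫ s, h x s ∂(Q x)) ≤ ∫ s, h xhat s ∂(Q xhat) ∧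
      (∫ s, h xhat s ∂(Q xhat)) ≤ (⨅ x, ∫ s, h x s ∂(Q x)) + 2 * cp * rN := by
  obtain rfl : Pamb = fun x => wassersteinBall (Phat x) rN := funext hPamb
  have hLipschitz x : LipschitzWith ⟨cp, hcp⟩ (h x) := .of_dist_le_mul (hLip x)
  have hJ_lower x : -C ≤ ∫ s, h x s ∂(Q x) := by
    have := (hcov x).1
    have hbound := norm_integral_le_of_norm_le_const (μ := Q x) (f := h x)
      (.of_forall (hbdd x))
    rw [probReal_univ, mul_one, Real.norm_eq_abs] at hbound
    exact neg_le_of_abs_le hbound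
  have hJ_le_sSup x : ∫ s, h x s ∂(Q x) ≤
      sSup ((fun P => ∫ s, h x s ∂P) '' wassersteinBall (Phat x) rN) := by
    have := hPhatProb x
    exact integral_le_sSup_integral_wassersteinBall (hcov x) (hLipschitz x)
  have := hPhatProb xstar
  refine ⟨ciInf_le ⟨-C, Set.forall_mem_range.2 hJ_lower⟩ xhat, ?_⟩
  calc ∫ s, h xhat s ∂(Q xhat)
      ≤ sSup ((fun P => ∫ s, h xhat s ∂P) '' wassersteinBall (Phat xhat) rN) := hJ_le_sSup xhat
    _ = ⨅ x, sSup ((fun P => ∫ s, h x s ∂P) '' wassersteinBall (Phat x) rN) := hmin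
    _ ≤ sSup ((fun P => ∫ s, h xstar s ∂P) '' wassersteinBall (Phat xstar) rN) :=
      ciInf_le ⟨-C, Set.forall_mem_range.2 fun x => (hJ_lower x).trans (hJ_le_sSup x)⟩ xstar
    _ ≤ ∫ s, h xstar s ∂(Q xstar) + 2 * cp * rN :=
      sSup_integral_wassersteinBall_le (hcov xstar) (hLipschitz xstar)
    _ = (⨅ x, ∫ s, h x s ∂(Q x)) + 2 * cp * rN := by rw [hstar]

/-- Under coverage by Wasserstein-ball ambiguity sets of radius `r_N` and
uniform Lipschitz continuity of `h` in its second argument with constant `c_p`, the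
out-of-sample value `J_N` of a DRO-optimal solution `x̂_N` satisfies
`J* ≤ J_N ≤ J* + 2 c_p r_N`, where `J* = min_x 𝔼_{Q(x)}[h(x,ξ)]` is the true optimum. -/
theorem dro_optimality_gap
    {X Ξ : Type*} [Nonempty X] [MeasurableSpace Ξ] [MetricSpace Ξ] [CompactSpace Ξ] [BorelSpace Ξ]
    (Phat Q : X → Measure Ξ) (rN cp : ℝ) (hcp : 0 ≤ cp) (hrN : 0 ≤ rN)
    (hPhatProb : ∀ x, IsProbabilityMeasure (Phat x))
    (hQProb : ∀ x, IsProbabilityMeasure (Q x))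
    (Pamb : X → Set (Measure Ξ))
    (hPamb : ∀ x, Pamb x =
      {P : Measure Ξ | IsProbabilityMeasure P ∧ wassersteinDist P (Phat x) ≤ rN})
    (hcov : ∀ x, Q x ∈ Pamb x)
    (h : X → Ξ → ℝ) (C : ℝ) (hbdd : ∀ x s, |h x s| ≤ C)
    (hLip : ∀ x s₁ s₂, |h x s₁ - h x s₂| ≤ cp * dist s₁ s₂)
    (xhat : X)
    (hmin : sSup ((fun P => ∫ s, h xhat s ∂P) '' Pamb xhat) =
      ⨅ x, sSup ((fun P => ∫ s, h x s ∂P) '' Pamb x))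
    (xstar : X)
    (hstar : (∫ s, h xstar s ∂(Q xstar)) = ⨅ x, ∫ s, h x s ∂(Q x)) :
    (⨅ x, ∫ s, h x s ∂(Q x)) ≤ ∫ s, h xhat s ∂(Q xhat) ∧
      (∫ s, h xhat s ∂(Q xhat)) ≤ (⨅ x, ∫ s, h x s ∂(Q x)) + 2 * cp * rN :=
  dro_optimality_gap_general Phat Q rN cp hcp hPhatProb Pamb hPamb hcov h C hbdd hLip xhat hmin
    xstar hstar
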